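/- Fix a set C of colors and a strict weak order ≺ on C^ω that is not regular-Mont. Then there exists a one-player game on a finite graph, all of whose vertices belong to a player a with preference ≺, such that for every m ∈ ℕ there is a run ρ for which player a has a winning strategy in the threshold game g_{a,ρ} but has no winning strategy in g_{a,ρ} using m bits of memory (and likewise for the non-strict threshold game for a and ρ). -/

import Mathlib

namespace GG

variable {V C A : Type}

/-- Append a finite list in front of an infinite sequence. -/
def appSeq (l : List V) (ρ : ℕ → V) : ℕ → V :=
  fun n => if n < l.length then l.getD n (ρ 0) else ρ (n - l.length)

/-- Glue two histories, identifying the last vertex of `l` with the first of `l'`. -/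
def glueL (l l' : List V) : List V := l.dropLast ++ l'

/-- Glue a history with a run, identifying the last vertex of `l` with the start of `ρ`. -/
def glueR (l : List V) (ρ : ℕ → V) : ℕ → V := appSeq l.dropLast ρ

/-- Ultimately periodic (regular) sequence. -/
def UltPeriodic (ρ : ℕ → V) : Prop := ∃ k p : ℕ, 0 < p ∧ ∀ n, k ≤ n → ρ (n + p) = ρ n

/-- Strict weak order: irreflexive, transitive, with transitive incomparability. -/
def SWO (r : (ℕ → C) → (ℕ → C) → Prop) : Prop :=
  (∀ x, ¬ r x x) ∧ (∀ x y z, r x y → r y z → r x z) ∧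
    (∀ x y z, ¬ r x y → ¬ r y z → ¬ r x z)

/-- A strategy uses `m` bits of memory: it is induced by a strategic update
`σ : V × {0,1}^m → V × {0,1}^m` together with an initial memory content. -/
def UsesMem (m : ℕ) (s : List V → V) : Prop :=
  ∃ (σ : V × (Fin m → Bool) → V × (Fin m → Bool)) (M₀ : Fin m → Bool),
    ∀ (l : List V) (v : V),
      s (l ++ [v]) = (σ (v, l.foldl (fun M u => (σ (u, M)).2) M₀)).1

/-- A finite-memory strategy. -/
def FinMem (s : List V → V) : Prop := ∃ m, UsesMem m s

/-- Regular language: recognized by a deterministic finite automaton. -/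
def RegLang {α : Type} (L : Set (List α)) : Prop :=
  ∃ (Q : Type) (_ : Fintype Q) (step : Q → α → Q) (init : Q) (acc : Set Q),
    ∀ w : List α, w ∈ L ↔ w.foldl step init ∈ acc

/-- Repeat a finite word `n` times. -/
def repW (l : List C) (n : ℕ) : List C := (List.replicate n l).flatten

/-- The infinite word `u · w^ω` (with default letter `d`, unused when `w ≠ []`). -/
def extWord (d : C) (u w : List C) : ℕ → C := fun n =>
  if n < u.length then u.getD n d else w.getD ((n - u.length) % w.length) d

/-- The regular-Mont condition for a preference on infinite color sequences. -/
def RegularMont (prec : (ℕ → C) → (ℕ → C) → Prop) : Prop :=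
  ∀ (d : C) (h₀ h₁ h₂ h₃ : List C), h₁ ≠ [] → h₃ ≠ [] →
    (∀ n : ℕ, prec (extWord d (h₀ ++ repW h₁ n ++ h₂) h₃)
        (extWord d (h₀ ++ repW h₁ (n + 1) ++ h₂) h₃)) →
    prec (extWord d (h₀ ++ h₂) h₃) (extWord d h₀ h₁)

/-- The weak optimality-is-regular property of a preference. -/
def WeakOIR (prec : (ℕ → C) → (ℕ → C) → Prop) : Prop :=
  ∀ p q : ℕ → C, UltPeriodic p → UltPeriodic q →
    ∃ M : Set (List C), RegLang M ∧ ∀ h : List C, h ∈ M ↔ prec (appSeq h p) (appSeq h q)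

/-- Automatic-piecewise prefix-linearity of a preference on `C^ω` (word level). -/
def APPLword (prec : (ℕ → C) → (ℕ → C) → Prop) : Prop :=
  ∃ (Q : Type) (_ : Fintype Q) (step : Q → C → Q) (init : Q),
    ∀ h h' : List C, h.foldl step init = h'.foldl step init →
      ∀ p q : ℕ → C,
        (prec (appSeq h p) (appSeq h q) ↔ prec (appSeq h' p) (appSeq h' q))

/-- A multi-player game played on a finite directed graph in which every
vertex has an outgoing edge. Players compare runs via color traces. -/
structure Game (V C A : Type) where
  edge : V → V → Prop
  serial : ∀ v, ∃ w, edge v w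
  start : V
  owner : V → A
  color : V → C
  pref : A → (ℕ → C) → (ℕ → C) → Prop

/-- Shifted strategy `s^h`. -/
def shiftStrat (l : List V) (s : List V → V) : List V → V :=
  fun l' => s (l.dropLast ++ l')

namespace Game

variable (g : Game V C A)

def lastV (l : List V) : V := l.getLast?.getD g.start

/-- Histories: finite paths starting at the start vertex. -/
def IsHist (l : List V) : Prop :=
  l ≠ [] ∧ l.head? = some g.start ∧ l.Chain' g.edge

/-- Runs: infinite paths starting at the start vertex. -/
def IsRun (ρ : ℕ → V) : Prop :=
  ρ 0 = g.start ∧ ∀ n, g.edge (ρ n) (ρ (n + 1))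

/-- Runs are compared via their color traces. -/
def runPref (a : A) (ρ ρ' : ℕ → V) : Prop :=
  g.pref a (fun n => g.color (ρ n)) (fun n => g.color (ρ' n))

/-- Validity of a strategy on the set `P` of controlled vertices. -/
def ValidOn (P : V → Prop) (s : List V → V) : Prop :=
  ∀ l, g.IsHist l → P (g.lastV l) → g.edge (g.lastV l) (s l)

def ValidStrat (a : A) (s : List V → V) : Prop :=
  g.ValidOn (fun v => g.owner v = a) s

/-- Validity for the coalition of all players other than `a`. -/
def ValidCo (a : A) (s : List V → V) : Prop :=
  g.ValidOn (fun v => g.owner v ≠ a) s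

def _root_.GG.histUpTo (ρ : ℕ → V) (n : ℕ) : List V := (List.range (n + 1)).map ρ

def _root_.GG.CompatOn (P : V → Prop) (s : List V → V) (ρ : ℕ → V) : Prop :=
  ∀ n, P (ρ n) → ρ (n + 1) = s (GG.histUpTo ρ n)

/-- A run is compatible with a strategy of player `a`. -/
def Compat (a : A) (s : List V → V) (ρ : ℕ → V) : Prop :=
  GG.CompatOn (fun v => g.owner v = a) s ρ

def CompatCo (a : A) (s : List V → V) (ρ : ℕ → V) : Prop :=
  GG.CompatOn (fun v => g.owner v ≠ a) s ρ

/-- `s` is a winning strategy of Player 1 (= player `a`) in the threshold game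
`g_{a,ρ}`: every compatible run is strictly preferred to `ρ`. -/
def Wins1 (a : A) (ρ : ℕ → V) (s : List V → V) : Prop :=
  g.ValidStrat a s ∧ ∀ ρ', g.IsRun ρ' → g.Compat a s ρ' → g.runPref a ρ ρ'

/-- `s` is a winning strategy of Player 2 (the coalition) in the threshold game `g_{a,ρ}`. -/
def Wins2 (a : A) (ρ : ℕ → V) (s : List V → V) : Prop :=
  g.ValidCo a s ∧ ∀ ρ', g.IsRun ρ' → g.CompatCo a s ρ' → ¬ g.runPref a ρ ρ'

/-- Player 1 wins the non-strict threshold game for `a` and `ρ` with `s`. -/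
def Wins1NS (a : A) (ρ : ℕ → V) (s : List V → V) : Prop :=
  g.ValidStrat a s ∧ ∀ ρ', g.IsRun ρ' → g.Compat a s ρ' → ¬ g.runPref a ρ' ρ

/-- Player 2 wins the non-strict threshold game for `a` and `ρ` with `s`. -/
def Wins2NS (a : A) (ρ : ℕ → V) (s : List V → V) : Prop :=
  g.ValidCo a s ∧ ∀ ρ', g.IsRun ρ' → g.CompatCo a s ρ' → g.runPref a ρ' ρ

/-- The future game `g^h` after history `l`. -/
def future (l : List V) : Game V C A where
  edge := g.edge
  serial := g.serial
  start := g.lastV l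
  owner := g.owner
  color := g.color
  pref := fun a p q =>
    g.pref a (appSeq (l.dropLast.map g.color) p) (appSeq (l.dropLast.map g.color) q)

/-- The guarantee `γ_a(s)` of a strategy. -/
def gam (a : A) (s : List V → V) : Set (ℕ → V) :=
  {ρ | g.IsRun ρ ∧ ∃ ρ', g.IsRun ρ' ∧ g.Compat a s ρ' ∧ ¬ g.runPref a ρ ρ'}

/-- The best guarantee `Γ_a`. -/
def Gam (a : A) : Set (ℕ → V) :=
  ⋂ s ∈ {s : List V → V | g.ValidStrat a s}, g.gam a s

def Optimal (a : A) (s : List V → V) : Prop := g.gam a s = g.Gam a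

def OptimalAt (a : A) (s : List V → V) (l : List V) : Prop :=
  (g.future l).Optimal a (shiftStrat l s)

def SubgameOptimal (a : A) (s : List V → V) : Prop :=
  ∀ l, g.IsHist l → g.OptimalAt a s l

/-- A history is compatible with a strategy of player `a`. -/
def HistCompat (a : A) (s : List V → V) (l : List V) : Prop :=
  ∀ i : ℕ, i + 1 < l.length → g.owner (l.getD i g.start) = a →
    l.getD (i + 1) g.start = s (l.take (i + 1))

def ConsistentOptimal (a : A) (s : List V → V) : Prop :=
  ∀ l, g.IsHist l → g.HistCompat a s l → g.OptimalAt a s l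

/-- The history of the play induced by a strategy profile, up to stage `n`. -/
def playHist (prof : A → List V → V) : ℕ → List V
  | 0 => [g.start]
  | n + 1 =>
      playHist prof n ++
        [prof (g.owner (g.lastV (playHist prof n))) (playHist prof n)]

/-- The run induced by a strategy profile. -/
def play (prof : A → List V → V) : ℕ → V := fun n => g.lastV (g.playHist prof n)

/-- Nash equilibrium. -/
def IsNash [DecidableEq A] (prof : A → List V → V) : Prop :=
  (∀ a, g.ValidStrat a (prof a)) ∧
    ∀ a s', g.ValidStrat a s' →
      ¬ g.runPref a (g.play prof) (g.play (Function.update prof a s'))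

/-- Optimality of the strategy `s` of player `a` is regular using `D` bits. -/
def OptRegBits (a : A) (s : List V → V) (D : ℕ) : Prop :=
  ∃ (Q : Type) (_ : Fintype Q) (step : Q → V → Q) (init : Q) (acc : Set Q),
    Fintype.card Q ≤ 2 ^ D ∧
      ∀ l, g.IsHist l → (l.foldl step init ∈ acc ↔ g.OptimalAt a s l)

/-- Player `a` has the optimality-is-regular property in `g`. -/
def OIR (a : A) : Prop :=
  ∀ s, g.ValidStrat a s → FinMem s →
    ∃ (Q : Type) (_ : Fintype Q) (step : Q → V → Q) (init : Q) (acc : Set Q),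
      ∀ l, g.IsHist l → (l.foldl step init ∈ acc ↔ g.OptimalAt a s l)

/-- The two-player antagonistic game associated to player `a`: Player `true`
controls `V_a` with preference `≺_a`, Player `false` the remaining vertices
with the inverse preference. -/
def anta [DecidableEq A] (a : A) : Game V C Bool where
  edge := g.edge
  serial := g.serial
  start := g.start
  owner := fun v => decide (g.owner v = a)
  color := g.color
  pref := fun p x y => if p = true then g.pref a x y else g.pref a y x

/-- The cumulative glued histories `h₀⌢h₁⌢…⌢h_n`. -/
def _root_.GG.cumul (h₀ : List V) (hs : ℕ → List V) : ℕ → List V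
  | 0 => h₀
  | n + 1 => glueL (GG.cumul h₀ hs n) (hs n)

/-- The preference of player `a` is Mont in `g`. -/
def MontPref (a : A) : Prop :=
  ∀ (h₀ : List V) (ρ : ℕ → V) (hs : ℕ → List V),
    g.IsHist h₀ → UltPeriodic ρ →
    (∀ n, g.IsRun (glueR (GG.cumul h₀ hs n) ρ)) →
    (∀ n, g.runPref a (glueR (GG.cumul h₀ hs n) ρ) (glueR (GG.cumul h₀ hs (n + 1)) ρ)) →
    ∀ lim : ℕ → V,
      (∀ n k, k < (GG.cumul h₀ hs n).dropLast.length →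
        lim k = (GG.cumul h₀ hs n).dropLast.getD k g.start) →
      (∀ N, ∃ n, N < (GG.cumul h₀ hs n).dropLast.length) →
      g.runPref a (glueR h₀ ρ) lim

/-- Player `a`'s preference is automatic-piecewise prefix-linear in `g`. -/
def APPLin (a : A) : Prop :=
  ∃ (Q : Type) (_ : Fintype Q) (step : Q → V → Q) (init : Q),
    ∀ h h', g.IsHist h → g.IsHist h' →
      h.foldl step init = h'.foldl step init →
      g.lastV h = g.lastV h' ∧
        ∀ ρ ρ' : ℕ → V,
          g.IsRun (glueR h ρ) → g.IsRun (glueR h ρ') →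
          g.IsRun (glueR h' ρ) → g.IsRun (glueR h' ρ') →
          (g.runPref a (glueR h ρ) (glueR h ρ') ↔ g.runPref a (glueR h' ρ) (glueR h' ρ'))

end Game

end GG

open GG

/-!
If `≺` is not regular-Mont, there are words `h₀ h₁ h₂ h₃` such that `xₙ = h₀ h₁ⁿ h₂ h₃^ω`
satisfies `x₀ ≺ x₁ ≺ x₂ ≺ ⋯` while `x₀ ⊀ z` for `z = h₀ h₁^ω`. Hence `xₖ ≺ xₙ` for `k < n`,
`xₙ ⊀ z` for all `n`, and `z ≺ xₙ` for `n ≥ 1`.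

The game is a lasso reading `h₀ h₁^ω`, with one extra edge from the end of the `h₁`-cycle into a
second lasso reading `h₂ h₃^ω`; its runs have traces `z` and `xₖ` (`k ≥ 1`). Against the
threshold `x_{2^m+1}`, going round the cycle `2^m + 2` (resp. `2^m + 1`) times wins the strict
(resp. non-strict) threshold game. A strategy with `m` bits of memory that passes the exit vertex
more than `2^m` times meets it twice with the same memory, and from then on repeats itself, never
leaving the cycle. So its run has trace `z` or `xₖ` with `k ≤ 2^m`, and both lose.
-/

namespace GG

section LassoArith

variable {a b : ℕ}

/- The lasso with stem `0, …, a - 1` and cycle `a, …, a + b - 1`: `lassoNext` is its successor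
map and `lassoPos a b t` the vertex reached from `0` after `t` steps. -/
def lassoPos (a b t : ℕ) : ℕ := if t < a then t else a + (t - a) % b

def lassoNext (a b i : ℕ) : ℕ := if i + 1 < a + b then i + 1 else a

lemma lassoPos_zero : lassoPos a b 0 = 0 := by
  unfold lassoPos
  split_ifs <;> simp_all

lemma lassoPos_lt (hb : 0 < b) (t : ℕ) : lassoPos a b t < a + b := by
  unfold lassoPos
  split_ifs
  · omega
  · have := Nat.mod_lt (t - a) hb
    omega

lemma lassoNext_lt (hb : 0 < b) (i : ℕ) : lassoNext a b i < a + b := by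
  unfold lassoNext
  split_ifs <;> omega

lemma lassoPos_of_lt {t : ℕ} (h : t < a) : lassoPos a b t = t := if_pos h

lemma lassoPos_of_le {t : ℕ} (h : a ≤ t) : lassoPos a b t = a + (t - a) % b := if_neg (by omega)

lemma lassoNext_lassoPos (hb : 0 < b) (t : ℕ) :
    lassoNext a b (lassoPos a b t) = lassoPos a b (t + 1) := by
  rcases lt_or_ge t a with h | h
  · rw [lassoPos_of_lt h, lassoNext, if_pos (by omega)]
    rcases lt_or_ge (t + 1) a with h' | h'
    · rw [lassoPos_of_lt h']
    · rw [lassoPos_of_le h', show t + 1 - a = 0 by omega, Nat.zero_mod]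
      omega
  obtain ⟨q, r, hr, hx⟩ : ∃ q r, r < b ∧ t - a = r + b * q :=
    ⟨_, _, Nat.mod_lt _ hb, (Nat.mod_add_div (t - a) b).symm⟩
  rw [lassoPos_of_le h, lassoPos_of_le (by omega), show t + 1 - a = (r + 1) + b * q by omega, hx,
    Nat.add_mul_mod_self_left, Nat.add_mul_mod_self_left, Nat.mod_eq_of_lt hr, lassoNext]
  split_ifs with hlt
  · rw [Nat.mod_eq_of_lt (by omega), Nat.add_assoc]
  · rw [show r + 1 = b by omega, Nat.mod_self]
    omega

lemma lassoPos_add_one_eq_iff (hb : 0 < b) {t : ℕ} :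
    lassoPos a b t + 1 = a + b ↔ ∃ k, 0 < k ∧ t + 1 = a + k * b := by
  constructor
  · intro h
    rcases lt_or_ge t a with ht | ht
    · rw [lassoPos_of_lt ht] at h
      omega
    obtain ⟨q, r, hr, hx⟩ : ∃ q r, r < b ∧ t - a = r + b * q :=
      ⟨_, _, Nat.mod_lt _ hb, (Nat.mod_add_div (t - a) b).symm⟩
    rw [lassoPos_of_le ht, hx, Nat.add_mul_mod_self_left, Nat.mod_eq_of_lt hr] at h
    refine ⟨q + 1, by omega, ?_⟩
    rw [Nat.add_one_mul, Nat.mul_comm]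
    omega
  · rintro ⟨k, hk, ht⟩
    obtain ⟨j, rfl⟩ : ∃ j, k = j + 1 := ⟨k - 1, by omega⟩
    rw [Nat.add_one_mul] at ht
    rw [lassoPos_of_le (by omega), show t - a = (b - 1) + j * b by omega,
      Nat.add_mul_mod_self_right, Nat.mod_eq_of_lt (by omega)]
    omega

end LassoArith

section Words

variable {C : Type} (d : C)

lemma repW_length (l : List C) (k : ℕ) : (repW l k).length = k * l.length := by
  simp [repW]

lemma repW_succ (l : List C) (k : ℕ) : repW l (k + 1) = l ++ repW l k := by
  simp [repW, List.replicate_succ]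

lemma extWord_of_lt {u w : List C} {t : ℕ} (h : t < u.length) : extWord d u w t = u.getD t d :=
  if_pos h

lemma extWord_of_le {u w : List C} {t : ℕ} (h : u.length ≤ t) :
    extWord d u w t = w.getD ((t - u.length) % w.length) d :=
  if_neg (by omega)

lemma extWord_append_of_lt {p u w : List C} {t : ℕ} (h : t < p.length) :
    extWord d (p ++ u) w t = p.getD t d := by
  rw [extWord_of_lt d (by simp; omega), List.getD_append _ _ _ _ h]

lemma extWord_append_of_le {p u w : List C} {t : ℕ} (h : p.length ≤ t) :
    extWord d (p ++ u) w t = extWord d u w (t - p.length) := by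
  rcases lt_or_ge (t - p.length) u.length with h' | h'
  · rw [extWord_of_lt d h', extWord_of_lt d (by simp; omega), List.getD_append_right _ _ _ _ h]
  · rw [extWord_of_le d h', extWord_of_le d (by simp; omega), List.length_append, Nat.sub_add_eq]

lemma getD_append_lassoPos (u w : List C) (t : ℕ) :
    (u ++ w).getD (lassoPos u.length w.length t) d = extWord d u w t := by
  unfold lassoPos extWord
  split_ifs with ht
  · exact List.getD_append _ _ _ _ ht
  · rw [List.getD_append_right _ _ _ _ (by omega), Nat.add_sub_cancel_left]

lemma extWord_append_cycle (u w : List C) :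
    extWord d (u ++ w) w = extWord d u w := by
  funext t
  rcases lt_or_ge t u.length with h | h
  · rw [extWord_append_of_lt d h, extWord_of_lt d h]
  rw [extWord_append_of_le d h, extWord_of_le d h]
  rcases lt_or_ge (t - u.length) w.length with h' | h'
  · rw [extWord_of_lt d h', Nat.mod_eq_of_lt h']
  · rw [extWord_of_le d h']
    conv_rhs => rw [← Nat.sub_add_cancel h', Nat.add_mod_right]

lemma extWord_append_repW (u w : List C) (k : ℕ) :
    extWord d (u ++ repW w k) w = extWord d u w := by
  induction k generalizing u with
  | zero => simp [repW]
  | succ k ih => rw [repW_succ, ← List.append_assoc, ih, extWord_append_cycle]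

end Words

namespace SWO

variable {C : Type} {prec : (ℕ → C) → (ℕ → C) → Prop} {x : ℕ → ℕ → C} {z : ℕ → C}

theorem rel_of_lt (h : SWO prec) (hx : ∀ n, prec (x n) (x (n + 1))) {i j : ℕ} (hij : i < j) :
    prec (x i) (x j) :=
  haveI : IsTrans (ℕ → C) prec := ⟨h.2.1⟩
  Nat.rel_of_forall_rel_succ_of_lt prec hx hij

theorem not_rel_of_not_rel_zero (h : SWO prec) (hx : ∀ n, prec (x n) (x (n + 1)))
    (hz : ¬ prec (x 0) z) (n : ℕ) : ¬ prec (x n) z := by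
  rcases n.eq_zero_or_pos with rfl | hn
  · exact hz
  · exact fun hnz => hz (h.2.1 _ _ _ (h.rel_of_lt hx hn) hnz)

theorem rel_of_not_rel_zero (h : SWO prec) (hx : ∀ n, prec (x n) (x (n + 1)))
    (hz : ¬ prec (x 0) z) {n : ℕ} (hn : 0 < n) : prec z (x n) := by
  by_contra hzn
  exact h.2.2 _ _ _ hz hzn (h.rel_of_lt hx hn)

end SWO

section LassoGraph

variable {a b c e : ℕ}

/- Two lassos, joined by a single edge from the last vertex of the first cycle to the start of the
second lasso. The run `exitRun k` goes round the first cycle `k` times before taking that edge. -/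
def lassoEdge (a b c e : ℕ) : Fin (a + b) ⊕ Fin (c + e) → Fin (a + b) ⊕ Fin (c + e) → Prop
  | .inl i, .inl j => j.val = lassoNext a b i
  | .inl i, .inr j => i.val + 1 = a + b ∧ j.val = 0
  | .inr i, .inr j => j.val = lassoNext c e i
  | .inr _, .inl _ => False

def stayRun (hb : 0 < b) (t : ℕ) : Fin (a + b) ⊕ Fin (c + e) :=
  .inl ⟨lassoPos a b t, lassoPos_lt hb t⟩

def exitRun (hb : 0 < b) (he : 0 < e) (k t : ℕ) : Fin (a + b) ⊕ Fin (c + e) :=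
  if t < a + k * b then .inl ⟨lassoPos a b t, lassoPos_lt hb t⟩
  else .inr ⟨lassoPos c e (t - (a + k * b)), lassoPos_lt he _⟩

lemma lassoEdge_exitRun (hb : 0 < b) (he : 0 < e) {k : ℕ} (hk : 0 < k) (t : ℕ) :
    lassoEdge a b c e (exitRun hb he k t) (exitRun hb he k (t + 1)) := by
  unfold exitRun
  split_ifs with h h' h'
  · exact (lassoNext_lassoPos hb t).symm
  · refine ⟨(lassoPos_add_one_eq_iff hb).mpr ⟨k, hk, by omega⟩, ?_⟩
    show lassoPos c e (t + 1 - (a + k * b)) = 0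
    rw [show t + 1 - (a + k * b) = 0 by omega, lassoPos_zero]
  · omega
  · show lassoPos c e (t + 1 - (a + k * b)) = lassoNext c e (lassoPos c e (t - (a + k * b)))
    rw [lassoNext_lassoPos he, show t + 1 - (a + k * b) = t - (a + k * b) + 1 by omega]

lemma eq_stayRun_of_isLeft (hb : 0 < b) {ρ : ℕ → Fin (a + b) ⊕ Fin (c + e)}
    (h0 : ρ 0 = stayRun hb 0) (hρ : ∀ t, lassoEdge a b c e (ρ t) (ρ (t + 1))) {t : ℕ}
    (hl : ∀ s ≤ t, (ρ s).isLeft) : ρ t = stayRun hb t := by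
  induction t with
  | zero => exact h0
  | succ t ih =>
    have hedge := hρ t
    rw [ih fun s hs => hl s (by omega)] at hedge
    obtain ⟨j, hj⟩ := Sum.isLeft_iff.mp (hl (t + 1) le_rfl)
    rw [hj] at hedge ⊢
    exact congrArg Sum.inl (Fin.ext (hedge.trans (lassoNext_lassoPos hb t)))

lemma eq_exitRun_of_ge (hb : 0 < b) (he : 0 < e) {ρ : ℕ → Fin (a + b) ⊕ Fin (c + e)}
    (hρ : ∀ t, lassoEdge a b c e (ρ t) (ρ (t + 1))) {k t : ℕ}
    (hexit : ρ (a + k * b) = exitRun hb he k (a + k * b)) (ht : a + k * b ≤ t) :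
    ρ t = exitRun hb he k t := by
  induction t, ht using Nat.le_induction with
  | base => exact hexit
  | succ t ht ih =>
    have hedge := hρ t
    rw [ih] at hedge
    unfold exitRun at hedge ⊢
    rw [if_neg (by omega)] at hedge ⊢
    rcases hj : ρ (t + 1) with j | j
    · rw [hj] at hedge
      exact hedge.elim
    · rw [hj] at hedge
      refine congrArg Sum.inr (Fin.ext (hedge.trans ?_))
      show _ = lassoPos c e (t + 1 - (a + k * b))
      rw [lassoNext_lassoPos he, show t + 1 - (a + k * b) = t - (a + k * b) + 1 by omega]

theorem lassoRun_cases (hb : 0 < b) (he : 0 < e) {ρ : ℕ → Fin (a + b) ⊕ Fin (c + e)}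
    (h0 : ρ 0 = stayRun hb 0) (hρ : ∀ t, lassoEdge a b c e (ρ t) (ρ (t + 1))) :
    ρ = stayRun hb ∨ ∃ k, 0 < k ∧ ρ = exitRun hb he k := by
  by_cases hl : ∀ t, (ρ t).isLeft
  · exact .inl (funext fun t => eq_stayRun_of_isLeft hb h0 hρ fun s _ => hl s)
  right
  classical
  push Not at hl
  obtain ⟨t₀, ht₀, hmin⟩ : ∃ t₀, ¬ (ρ t₀).isLeft ∧ ∀ s < t₀, (ρ s).isLeft :=
    ⟨Nat.find hl, Nat.find_spec hl, fun s hs => by simpa using Nat.find_min hl hs⟩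
  obtain ⟨t, rfl⟩ : ∃ t, t₀ = t + 1 := by
    refine Nat.exists_eq_add_one.mpr (Nat.pos_of_ne_zero ?_)
    rintro rfl
    simp [h0, stayRun] at ht₀
  obtain ⟨j, hj⟩ := Sum.isRight_iff.mp (by simpa using ht₀)
  have hedge := hρ t
  rw [eq_stayRun_of_isLeft hb h0 hρ fun s hs => hmin s (by omega), hj] at hedge
  obtain ⟨k, hk, htk⟩ := (lassoPos_add_one_eq_iff hb).mp hedge.1
  refine ⟨k, hk, funext fun s => ?_⟩
  rcases lt_or_ge s (a + k * b) with hs | hs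
  · rw [eq_stayRun_of_isLeft hb h0 hρ fun r hr => hmin r (by omega)]
    simp [stayRun, exitRun, hs]
  · refine eq_exitRun_of_ge hb he hρ ?_ hs
    rw [← htk, hj, exitRun, if_neg (by omega)]
    refine congrArg Sum.inr (Fin.ext ?_)
    show j.val = lassoPos c e (t + 1 - (a + k * b))
    rw [htk, Nat.sub_self, lassoPos_zero]
    exact hedge.2

end LassoGraph

section Memory

variable {V : Type}

lemma length_histUpTo (ρ : ℕ → V) (n : ℕ) : (histUpTo ρ n).length = n + 1 := by
  simp [histUpTo]

lemma histUpTo_eq_concat (ρ : ℕ → V) (n : ℕ) :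
    histUpTo ρ n = (List.range n).map ρ ++ [ρ n] := by
  simp [histUpTo, List.range_succ]

theorem UsesMem.frequently_eq {m : ℕ} {s : List V → V} (hs : UsesMem m s) {ρ : ℕ → V}
    (hρ : ∀ t, ρ (t + 1) = s (histUpTo ρ t)) {v : V} {f : Fin (2 ^ m + 1) → ℕ}
    (hf : f.Injective) (hv : ∀ i, ρ (f i) = v) : ∃ᶠ t in Filter.atTop, ρ t = v := by
  obtain ⟨σ, M₀, hσ⟩ := hs
  set mem : ℕ → Fin m → Bool := fun t => ((List.range t).map ρ).foldl (fun M u => (σ (u, M)).2) M₀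
  have hstep : ∀ t, σ (ρ t, mem t) = (ρ (t + 1), mem (t + 1)) := fun t => by
    refine Prod.ext ?_ ?_
    · rw [hρ, histUpTo_eq_concat, hσ]
    · simp [mem, List.range_succ]
  have horbit : ∀ t, (ρ t, mem t) = σ^[t] (ρ 0, mem 0) := fun t => by
    induction t with
    | zero => rfl
    | succ t ih => rw [← hstep, ih, Function.iterate_succ_apply']
  have hrepeat : ∀ i j, f i < f j → mem (f i) = mem (f j) → ∃ᶠ t in Filter.atTop, ρ t = v := by
    intro i j hij hmem
    have hper : Function.IsPeriodicPt σ (f j - f i) (ρ (f i), mem (f i)) := by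
      rw [Function.IsPeriodicPt, Function.IsFixedPt, horbit, ← Function.iterate_add_apply,
        Nat.sub_add_cancel hij.le, ← horbit, ← horbit, hv, hv, hmem]
    refine Filter.frequently_atTop.mpr fun N => ⟨(f j - f i) * N + f i, ?_, ?_⟩
    · nlinarith [Nat.sub_pos_of_lt hij]
    · have := horbit ((f j - f i) * N + f i)
      rw [Function.iterate_add_apply, ← horbit, (hper.mul_const N).eq] at this
      rw [← hv i]
      exact congrArg Prod.fst this
  obtain ⟨i, j, hij, hmem⟩ := Fintype.exists_ne_map_eq_of_card_lt (fun i => mem (f i)) (by simp)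
  rcases lt_or_gt_of_ne (hf.ne hij) with h | h
  · exact hrepeat i j h hmem
  · exact hrepeat j i h hmem.symm

end Memory

namespace Game

variable {V C A : Type} (g : Game V C A)

lemma lastV_histUpTo (ρ : ℕ → V) (n : ℕ) : g.lastV (histUpTo ρ n) = ρ n := by
  simp [lastV, histUpTo_eq_concat]

lemma isHist_histUpTo {ρ : ℕ → V} {n : ℕ} (h0 : ρ 0 = g.start)
    (hρ : ∀ k < n, g.edge (ρ k) (ρ (k + 1))) : g.IsHist (histUpTo ρ n) := by
  refine ⟨by simp [histUpTo], by simp [histUpTo, List.range_succ_eq_map, h0], ?_⟩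
  show List.IsChain g.edge ((List.range (n + 1)).map ρ)
  rw [List.isChain_map, List.isChain_range_succ]
  exact hρ

lemma histUpTo_play (prof : A → List V → V) (n : ℕ) :
    histUpTo (g.play prof) n = g.playHist prof n := by
  induction n with
  | zero => simp [histUpTo, play, playHist, lastV]
  | succ n ih =>
    rw [histUpTo_eq_concat]
    show histUpTo _ n ++ [g.lastV (g.playHist prof (n + 1))] = _
    rw [ih, playHist]
    simp [lastV]

theorem exists_isRun_compat {a : A} (hown : ∀ v, g.owner v = a) {s : List V → V}
    (hs : g.ValidStrat a s) : ∃ ρ, g.IsRun ρ ∧ g.Compat a s ρ := by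
  set ρ := g.play fun _ => s
  have hnext : ∀ n, ρ (n + 1) = s (histUpTo ρ n) := fun n => by
    rw [histUpTo_play]
    simp [ρ, play, playHist, lastV]
  have h0 : ρ 0 = g.start := by simp [ρ, play, playHist, lastV]
  have hedge : ∀ n, g.edge (ρ n) (ρ (n + 1)) := fun n => by
    induction n using Nat.strong_induction_on with
    | _ n ih =>
      have := hs _ (g.isHist_histUpTo h0 ih) (hown _)
      rwa [lastV_histUpTo, ← hnext] at this
  exact ⟨ρ, ⟨h0, hedge⟩, fun n _ => hnext n⟩

open Classical in
noncomputable def followStrat (ρ : ℕ → V) (l : List V) : V :=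
  if g.edge (g.lastV l) (ρ l.length) then ρ l.length else (g.serial (g.lastV l)).choose

lemma validOn_followStrat (P : V → Prop) (ρ : ℕ → V) : g.ValidOn P (g.followStrat ρ) := by
  intro l _ _
  unfold followStrat
  split_ifs with h
  · exact h
  · exact (g.serial _).choose_spec

lemma eq_of_compat_followStrat {a : A} (hown : ∀ v, g.owner v = a) {ρ ρ' : ℕ → V}
    (hρ : g.IsRun ρ) (hρ' : g.IsRun ρ') (hc : g.Compat a (g.followStrat ρ) ρ') : ρ' = ρ := by
  funext t
  induction t with
  | zero => exact hρ'.1.trans hρ.1.symm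
  | succ t ih =>
    have hedge : g.edge (g.lastV (histUpTo ρ' t)) (ρ (histUpTo ρ' t).length) := by
      rw [lastV_histUpTo, length_histUpTo, ih]
      exact hρ.2 t
    rw [hc t (hown _), followStrat, if_pos hedge, length_histUpTo]

theorem wins1_followStrat {a : A} (hown : ∀ v, g.owner v = a) {ρ ρ₀ : ℕ → V}
    (hρ₀ : g.IsRun ρ₀) (h : g.runPref a ρ ρ₀) : g.Wins1 a ρ (g.followStrat ρ₀) :=
  ⟨g.validOn_followStrat _ ρ₀, fun _ hρ' hc => by rwa [g.eq_of_compat_followStrat hown hρ₀ hρ' hc]⟩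

theorem wins1NS_followStrat {a : A} (hown : ∀ v, g.owner v = a) {ρ ρ₀ : ℕ → V}
    (hρ₀ : g.IsRun ρ₀) (h : ¬ g.runPref a ρ₀ ρ) : g.Wins1NS a ρ (g.followStrat ρ₀) :=
  ⟨g.validOn_followStrat _ ρ₀, fun _ hρ' hc => by rwa [g.eq_of_compat_followStrat hown hρ₀ hρ' hc]⟩

end Game

section LassoGame

variable {a b c e : ℕ}

lemma le_of_usesMem_exitRun (hb : 0 < b) (he : 0 < e) {k m : ℕ}
    {s : List (Fin (a + b) ⊕ Fin (c + e)) → Fin (a + b) ⊕ Fin (c + e)} (hs : UsesMem m s)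
    (hc : ∀ t, exitRun hb he k (t + 1) = s (histUpTo (exitRun hb he k) t)) : k ≤ 2 ^ m := by
  by_contra! hk'
  let f : Fin (2 ^ m + 1) → ℕ := fun i => a + (i.val + 1) * b - 1
  have hpos (i : Fin (2 ^ m + 1)) : b ≤ (i.val + 1) * b := Nat.le_mul_of_pos_left _ (by omega)
  have hf : f.Injective := fun i j hij => by
    have := hpos i
    have := hpos j
    have hmul : (i.val + 1) * b = (j.val + 1) * b := by simp only [f] at hij; omega
    exact Fin.ext (by simpa using Nat.eq_of_mul_eq_mul_right hb hmul)
  have hvis (i : Fin (2 ^ m + 1)) :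
      exitRun hb he k (f i) = (.inl ⟨a + b - 1, by omega⟩ : Fin (a + b) ⊕ Fin (c + e)) := by
    have hle : (i.val + 1) * b ≤ k * b := Nat.mul_le_mul_right _ (by omega)
    have := hpos i
    have hloop : lassoPos a b (f i) + 1 = a + b :=
      (lassoPos_add_one_eq_iff hb).mpr ⟨i.val + 1, by omega, by simp only [f]; omega⟩
    rw [exitRun, if_pos (by simp only [f]; omega)]
    exact congrArg Sum.inl (Fin.ext (by simp only; omega))
  obtain ⟨t, ht, hvt⟩ := Filter.frequently_atTop.mp (hs.frequently_eq hc hf hvis) (a + k * b)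
  rw [exitRun, if_neg (by omega)] at hvt
  exact Sum.inr_ne_inl hvt

variable {C : Type} {prec : (ℕ → C) → (ℕ → C) → Prop} {d : C} {h₀ h₁ h₂ h₃ : List C}

def lassoGame (prec : (ℕ → C) → (ℕ → C) → Prop) (d : C) (h₀ h₁ h₂ h₃ : List C)
    (hb : 0 < h₁.length) (he : 0 < h₃.length) :
    Game (Fin (h₀.length + h₁.length) ⊕ Fin (h₂.length + h₃.length)) C Bool where
  edge := lassoEdge _ _ _ _
  serial
    | .inl i => ⟨.inl ⟨lassoNext _ _ i, lassoNext_lt hb _⟩, rfl⟩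
    | .inr i => ⟨.inr ⟨lassoNext _ _ i, lassoNext_lt he _⟩, rfl⟩
  start := stayRun hb 0
  owner _ := true
  color := Sum.elim (fun i => (h₀ ++ h₁).getD i d) (fun j => (h₂ ++ h₃).getD j d)
  pref _ := prec

lemma lassoGame_color_stayRun (hb : 0 < h₁.length) (he : 0 < h₃.length) :
    (fun t => (lassoGame prec d h₀ h₁ h₂ h₃ hb he).color (stayRun hb t)) = extWord d h₀ h₁ :=
  funext fun t => getD_append_lassoPos d h₀ h₁ t

lemma lassoGame_color_exitRun (hb : 0 < h₁.length) (he : 0 < h₃.length) (k : ℕ) :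
    (fun t => (lassoGame prec d h₀ h₁ h₂ h₃ hb he).color (exitRun hb he k t)) =
      extWord d (h₀ ++ repW h₁ k ++ h₂) h₃ := by
  funext t
  have hlen : (h₀ ++ repW h₁ k).length = h₀.length + k * h₁.length := by simp [repW_length]
  unfold exitRun
  split_ifs with ht
  · show (h₀ ++ h₁).getD _ d = _
    rw [getD_append_lassoPos, ← extWord_append_repW d h₀ h₁ k, extWord_of_lt d (by omega),
      extWord_append_of_lt d (by omega)]
  · show (h₂ ++ h₃).getD _ d = _
    rw [getD_append_lassoPos, extWord_append_of_le d (by omega), hlen]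

lemma lassoGame_isRun_exitRun (hb : 0 < h₁.length) (he : 0 < h₃.length) {k : ℕ} (hk : 0 < k) :
    (lassoGame prec d h₀ h₁ h₂ h₃ hb he).IsRun (exitRun hb he k) := by
  refine ⟨?_, lassoEdge_exitRun hb he hk⟩
  have : 0 < k * h₁.length := Nat.mul_pos hk hb
  simp only [exitRun, lassoGame, stayRun, if_pos (show 0 < h₀.length + k * h₁.length by omega)]

theorem lassoGame_exists_compat_of_usesMem (hb : 0 < h₁.length) (he : 0 < h₃.length) {m : ℕ}
    {s : List (Fin (h₀.length + h₁.length) ⊕ Fin (h₂.length + h₃.length)) →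
      Fin (h₀.length + h₁.length) ⊕ Fin (h₂.length + h₃.length)}
    (hs : (lassoGame prec d h₀ h₁ h₂ h₃ hb he).ValidStrat true s) (hmem : UsesMem m s) :
    ∃ ρ, (lassoGame prec d h₀ h₁ h₂ h₃ hb he).IsRun ρ ∧
      (lassoGame prec d h₀ h₁ h₂ h₃ hb he).Compat true s ρ ∧
      (ρ = stayRun hb ∨ ∃ k ≤ 2 ^ m, ρ = exitRun hb he k) := by
  obtain ⟨ρ, hρ, hc⟩ := Game.exists_isRun_compat _ (fun _ => rfl) hs
  refine ⟨ρ, hρ, hc, ?_⟩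
  rcases lassoRun_cases hb he hρ.1 hρ.2 with h | ⟨k, -, rfl⟩
  · exact .inl h
  · exact .inr ⟨k, le_of_usesMem_exitRun hb he hmem fun t => hc t rfl, rfl⟩

theorem lassoGame_threshold (hb : 0 < h₁.length) (he : 0 < h₃.length) (hswo : SWO prec)
    (hx : ∀ n, prec (extWord d (h₀ ++ repW h₁ n ++ h₂) h₃)
      (extWord d (h₀ ++ repW h₁ (n + 1) ++ h₂) h₃))
    (hz : ¬ prec (extWord d (h₀ ++ repW h₁ 0 ++ h₂) h₃) (extWord d h₀ h₁)) (m : ℕ) :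
    (∃ ρ, (lassoGame prec d h₀ h₁ h₂ h₃ hb he).IsRun ρ ∧
        (∃ s, (lassoGame prec d h₀ h₁ h₂ h₃ hb he).Wins1 true ρ s) ∧
        ¬ ∃ s, (lassoGame prec d h₀ h₁ h₂ h₃ hb he).Wins1 true ρ s ∧ UsesMem m s) ∧
      (∃ ρ, (lassoGame prec d h₀ h₁ h₂ h₃ hb he).IsRun ρ ∧
        (∃ s, (lassoGame prec d h₀ h₁ h₂ h₃ hb he).Wins1NS true ρ s) ∧
        ¬ ∃ s, (lassoGame prec d h₀ h₁ h₂ h₃ hb he).Wins1NS true ρ s ∧ UsesMem m s) := by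
  have hrun (k : ℕ) : (lassoGame prec d h₀ h₁ h₂ h₃ hb he).IsRun (exitRun hb he (k + 1)) :=
    lassoGame_isRun_exitRun hb he k.succ_pos
  have hlt {k : ℕ} (hk : k ≤ 2 ^ m) := hswo.rel_of_lt hx (Nat.lt_succ_of_le hk)
  refine ⟨⟨exitRun hb he (2 ^ m + 1), hrun _, ⟨_, Game.wins1_followStrat _ (fun _ => rfl)
    (hrun (2 ^ m + 1)) ?_⟩, ?_⟩, ⟨exitRun hb he (2 ^ m + 1), hrun _, ⟨_,
    Game.wins1NS_followStrat _ (fun _ => rfl) (hrun (2 ^ m)) ?_⟩, ?_⟩⟩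
  · simp only [Game.runPref, lassoGame_color_exitRun]
    exact hx _
  · rintro ⟨s, ⟨hs, hwin⟩, hmem⟩
    obtain ⟨ρ, hρ, hc, rfl | ⟨k, hk, rfl⟩⟩ := lassoGame_exists_compat_of_usesMem hb he hs hmem
    · have hbeat := hwin _ hρ hc
      simp only [Game.runPref, lassoGame_color_exitRun, lassoGame_color_stayRun] at hbeat
      exact hswo.not_rel_of_not_rel_zero hx hz _ hbeat
    · have hbeat := hwin _ hρ hc
      simp only [Game.runPref, lassoGame_color_exitRun] at hbeat
      exact hswo.1 _ (hswo.2.1 _ _ _ (hlt hk) hbeat)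
  · simp only [Game.runPref, lassoGame_color_exitRun]
    exact hswo.1 _
  · rintro ⟨s, ⟨hs, hwin⟩, hmem⟩
    obtain ⟨ρ, hρ, hc, rfl | ⟨k, hk, rfl⟩⟩ := lassoGame_exists_compat_of_usesMem hb he hs hmem
    · have hlose := hwin _ hρ hc
      simp only [Game.runPref, lassoGame_color_exitRun, lassoGame_color_stayRun] at hlose
      exact hlose (hswo.rel_of_not_rel_zero hx hz (Nat.succ_pos _))
    · have hlose := hwin _ hρ hc
      simp only [Game.runPref, lassoGame_color_exitRun] at hlose
      exact hlose (hlt hk)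

end LassoGame

end GG

/-- Lemma 4.5: if a preference is not regular-Mont, then there is a one-player
game where the player does not win her winnable (strict and non-strict)
threshold games with uniformly finite memory. -/
theorem stmt10
    {C : Type}
    (prec : (ℕ → C) → (ℕ → C) → Prop) (hswo : GG.SWO prec)
    (hnm : ¬ GG.RegularMont prec) :
    ∃ (V : Type) (_ : Fintype V) (g : GG.Game V C Bool),
      (∀ v, g.owner v = true) ∧ g.pref true = prec ∧
      ∀ m : ℕ,
        (∃ ρ, g.IsRun ρ ∧ (∃ s, g.Wins1 true ρ s) ∧
          ¬ ∃ s, g.Wins1 true ρ s ∧ GG.UsesMem m s) ∧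
        (∃ ρ, g.IsRun ρ ∧ (∃ s, g.Wins1NS true ρ s) ∧
          ¬ ∃ s, g.Wins1NS true ρ s ∧ GG.UsesMem m s) := by
  simp only [RegularMont, not_forall, exists_prop] at hnm
  obtain ⟨d, h₀, h₁, h₂, h₃, hh₁, hh₃, hx, hz⟩ := hnm
  have hb := List.length_pos_iff.mpr hh₁
  have he := List.length_pos_iff.mpr hh₃
  refine ⟨_, inferInstance, lassoGame prec d h₀ h₁ h₂ h₃ hb he, fun _ => rfl, rfl,
    lassoGame_threshold hb he hswo hx ?_⟩
  simpa [repW] using hz
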